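/- arXiv:math/0702244 — 4 statements merged into one kernel-verified Lean document; each statement's English description precedes it below -/
import Mathlib

section
/- For γ = [[a,b],[c,d]] in SL₂(ℝ) with ‖γ‖ = max(|a|,|b|,|c|,|d|), the hyperbolic distance from i to γ·i satisfies d(γ·i, i) ≤ 2 log ‖γ‖ + 3 log 2. -/
/-!
For `γ = [[a, b], [c, d]] ∈ SL₂(ℝ)` one has `γ • i = ((ac + bd) + i) / (c² + d²)`, and the formula
`cosh d(z, w) = ((Re z - Re w)² + (Im z)² + (Im w)²) / (2 Im z Im w)` together with
`(ac + bd)² + 1 = (a² + b²)(c² + d²)` gives `cosh d(γ • i, i) = (a² + b² + c² + d²) / 2`.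
Since `e^t < 2 cosh t`, the distance is at most `log (a² + b² + c² + d²) ≤ log (4 ‖γ‖²)`.
-/

open UpperHalfPlane Real
open scoped MatrixGroups

namespace UpperHalfPlane

lemma coe_specialLinearGroup_smul_I (γ : SL(2, ℝ)) :
    ((γ • I : ℍ) : ℂ) = (γ 0 0 * Complex.I + γ 0 1) / (γ 1 0 * Complex.I + γ 1 1) := by
  rw [specialLinearGroup_apply]
  rfl

lemma cosh_dist_specialLinearGroup_smul_I (γ : SL(2, ℝ)) :
    cosh (dist (γ • I) I) = (γ 0 0 ^ 2 + γ 0 1 ^ 2 + γ 1 0 ^ 2 + γ 1 1 ^ 2) / 2 := by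
  have hdet : γ 0 0 * γ 1 1 - γ 0 1 * γ 1 0 = 1 := by
    rw [← Matrix.det_fin_two]
    exact γ.det_coe
  have hre : (γ • I).re = (γ 0 0 * γ 1 0 + γ 0 1 * γ 1 1) / (γ 1 0 ^ 2 + γ 1 1 ^ 2) := by
    rw [← coe_re, coe_specialLinearGroup_smul_I, Complex.div_re]
    simp only [Complex.add_re, Complex.mul_re, Complex.ofReal_re, Complex.I_re, mul_zero,
      Complex.ofReal_im, Complex.I_im, mul_one, sub_self, zero_add, Complex.normSq_apply,
      Complex.add_im, Complex.mul_im, add_zero]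
    ring
  have him : (γ • I).im = 1 / (γ 1 0 ^ 2 + γ 1 1 ^ 2) := by
    rw [← coe_im, coe_specialLinearGroup_smul_I, Complex.div_im]
    simp only [Complex.add_im, Complex.mul_im, Complex.ofReal_re, Complex.I_im, mul_one,
      Complex.ofReal_im, Complex.I_re, mul_zero, add_zero, Complex.add_re, Complex.mul_re,
      sub_self, zero_add, Complex.normSq_apply]
    rw [div_sub_div_same, hdet]
    ring
  have hden : γ 1 0 ^ 2 + γ 1 1 ^ 2 ≠ 0 := fun h ↦ by
    simpa [him, h] using (γ • I).im_pos
  rw [cosh_dist', hre, him, I_re, I_im]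
  field_simp
  linear_combination (-(γ 0 0 * γ 1 1 - γ 0 1 * γ 1 0) - 1) * hdet

end UpperHalfPlane

lemma Real.le_log_two_mul_cosh (t : ℝ) : t ≤ log (2 * cosh t) := by
  rw [le_log_iff_exp_le (by positivity), ← cosh_add_sinh]
  linarith [sinh_lt_cosh t]

lemma sq_add_sq_add_sq_add_sq_le {R : Type*} [CommRing R] [LinearOrder R] [IsStrictOrderedRing R]
    (a b c d : R) :
    a ^ 2 + b ^ 2 + c ^ 2 + d ^ 2 ≤ 4 * max (max |a| |b|) (max |c| |d|) ^ 2 := by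
  have h (x : R) (hx : |x| ≤ max (max |a| |b|) (max |c| |d|)) :
      x ^ 2 ≤ max (max |a| |b|) (max |c| |d|) ^ 2 := by
    rw [← sq_abs]
    exact pow_le_pow_left₀ (abs_nonneg x) hx 2
  linarith [h a (by simp), h b (by simp), h c (by simp), h d (by simp)]

/-- For γ ∈ SL₂(ℝ) with ‖γ‖ = max(|a|,|b|,|c|,|d|),
d(γ·i, i) ≤ 2 log ‖γ‖ + 3 log 2. -/
theorem dist_smul_I_le (γ : Matrix.SpecialLinearGroup (Fin 2) ℝ) :
    dist (γ • UpperHalfPlane.I) UpperHalfPlane.I ≤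
      2 * Real.log (max (max |γ 0 0| |γ 0 1|) (max |γ 1 0| |γ 1 1|)) + 3 * Real.log 2 := by
  set m := max (max |γ 0 0| |γ 0 1|) (max |γ 1 0| |γ 1 1|)
  have hcosh := cosh_dist_specialLinearGroup_smul_I γ
  have hle : γ 0 0 ^ 2 + γ 0 1 ^ 2 + γ 1 0 ^ 2 + γ 1 1 ^ 2 ≤ 4 * m ^ 2 :=
    sq_add_sq_add_sq_add_sq_le _ _ _ _
  have hpos : 0 < γ 0 0 ^ 2 + γ 0 1 ^ 2 + γ 1 0 ^ 2 + γ 1 1 ^ 2 := by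
    linarith [cosh_pos (dist (γ • I) I)]
  have hm : m ≠ 0 := by
    rintro h
    rw [h] at hle
    linarith
  calc dist (γ • I) I ≤ log (2 * cosh (dist (γ • I) I)) := le_log_two_mul_cosh _
    _ = log (γ 0 0 ^ 2 + γ 0 1 ^ 2 + γ 1 0 ^ 2 + γ 1 1 ^ 2) := by
      rw [hcosh, mul_div_cancel₀ _ two_ne_zero]
    _ ≤ log (4 * m ^ 2) := log_le_log hpos hle
    _ = 2 * log m + 2 * log 2 := by
      rw [log_mul (by norm_num) (by positivity), log_pow, show (4 : ℝ) = 2 ^ 2 by norm_num,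
        log_pow]
      push_cast
      ring
    _ ≤ 2 * log m + 3 * log 2 := by linarith [log_nonneg one_le_two]
end

section
/- For γ = [[a,b],[c,d]] in SL₂(ℝ) with determinant 1 and ‖γ‖ = max(|a|,|b|,|c|,|d|), one has d(γ·i, i) = 2 log(√((b-c)² + (a+d)²) + √((b+c)² + (a-d)²)) - 2 log 2. -/
open UpperHalfPlane

/-!
By `UpperHalfPlane.exp_half_dist`, `exp (d(z, i) / 2) = (|z - i| + |z + i|) / (2 √(Im z))`.
For `z = γ • i = (a i + b) / (c i + d)`, multiplying numerator and denominator by `|c i + d|`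
turns `|z - i|` and `|z + i|` into `|(b + c) + (a - d) i|` and `|(b - c) + (a + d) i|`, and
`√(Im z)` into `1`, since `Im (γ • z) = Im z / |c z + d|²`.
-/

namespace UpperHalfPlane

open ComplexConjugate MatrixGroups

variable (γ : SL(2, ℝ)) (z : ℍ)

lemma coe_smul_eq_num_div_denom : ((γ • z : ℍ) : ℂ) = num γ z / denom γ z := by
  rw [coe_specialLinearGroup_apply]
  simp [num, denom]

lemma norm_denom_mul_dist_coe_smul (w : ℂ) :
    ‖denom γ z‖ * dist ((γ • z : ℍ) : ℂ) w = ‖num γ z - w * denom γ z‖ := by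
  rw [Complex.dist_eq, ← norm_mul, mul_sub, coe_smul_eq_num_div_denom,
    mul_div_cancel₀ _ (denom_ne_zero γ z), mul_comm w]

lemma norm_denom_mul_sqrt_im_smul : ‖denom γ z‖ * √((γ • z).im) = √z.im := by
  have hj : ‖denom γ z‖ ≠ 0 := norm_ne_zero_iff.mpr (denom_ne_zero γ z)
  rw [MulAction.compHom_smul_def, im_smul_eq_div_normSq, Complex.normSq_eq_norm_sq,
    Real.sqrt_div' _ (sq_nonneg _), Real.sqrt_sq (norm_nonneg _)]
  simp [denom, Matrix.SpecialLinearGroup.coe_GL_coe_matrix] at hj ⊢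
  field_simp

lemma exp_half_dist_smul (w : ℍ) :
    Real.exp (dist (γ • z) w / 2) =
      (‖num γ z - w * denom γ z‖ + ‖num γ z - conj (w : ℂ) * denom γ z‖) /
        (2 * √(z.im * w.im)) := by
  have hj : ‖denom γ z‖ ≠ 0 := norm_ne_zero_iff.mpr (denom_ne_zero γ z)
  rw [exp_half_dist, ← norm_denom_mul_dist_coe_smul, ← norm_denom_mul_dist_coe_smul, ← mul_add,
    Real.sqrt_mul (γ • z).im_pos.le, Real.sqrt_mul z.im_pos.le,
    ← norm_denom_mul_sqrt_im_smul γ z]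
  field_simp

lemma norm_num_I_sub_I_mul_denom_I :
    ‖num γ Complex.I - Complex.I * denom γ Complex.I‖ =
      √((γ 0 1 + γ 1 0) ^ 2 + (γ 0 0 - γ 1 1) ^ 2) := by
  rw [← Complex.norm_add_mul_I]
  congr 1
  simp only [num, denom, Matrix.SpecialLinearGroup.coe_GL_coe_matrix]
  push_cast
  linear_combination (-(γ 1 0 : ℂ)) * Complex.I_sq

lemma norm_num_I_add_I_mul_denom_I :
    ‖num γ Complex.I + Complex.I * denom γ Complex.I‖ =
      √((γ 0 1 - γ 1 0) ^ 2 + (γ 0 0 + γ 1 1) ^ 2) := by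
  rw [← Complex.norm_add_mul_I]
  congr 1
  simp only [num, denom, Matrix.SpecialLinearGroup.coe_GL_coe_matrix]
  push_cast
  linear_combination (γ 1 0 : ℂ) * Complex.I_sq

lemma exp_half_dist_smul_I :
    Real.exp (dist (γ • I) I / 2) =
      (√((γ 0 1 - γ 1 0) ^ 2 + (γ 0 0 + γ 1 1) ^ 2) +
        √((γ 0 1 + γ 1 0) ^ 2 + (γ 0 0 - γ 1 1) ^ 2)) / 2 := by
  rw [exp_half_dist_smul, coe_I, Complex.conj_I, neg_mul, sub_neg_eq_add,
    norm_num_I_sub_I_mul_denom_I, norm_num_I_add_I_mul_denom_I, I_im, mul_one, Real.sqrt_one,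
    mul_one, add_comm]

end UpperHalfPlane

/-- For γ ∈ SL₂(ℝ),
d(γ·i, i) = 2 log(√((b-c)²+(a+d)²) + √((b+c)²+(a-d)²)) - 2 log 2. -/
theorem dist_smul_I_eq (γ : Matrix.SpecialLinearGroup (Fin 2) ℝ) :
    dist (γ • UpperHalfPlane.I) UpperHalfPlane.I =
      2 * Real.log
          (Real.sqrt ((γ 0 1 - γ 1 0) ^ 2 + (γ 0 0 + γ 1 1) ^ 2) +
            Real.sqrt ((γ 0 1 + γ 1 0) ^ 2 + (γ 0 0 - γ 1 1) ^ 2)) -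
        2 * Real.log 2 := by
  have hexp := exp_half_dist_smul_I γ
  have hsum_pos := (div_pos_iff_of_pos_right two_pos).mp (hexp ▸ Real.exp_pos _)
  rw [← mul_sub, ← Real.log_div hsum_pos.ne' two_ne_zero, ← hexp, Real.log_exp]
  ring
end

section
/- Let X = max(|a|,|b|,|c|,|d|) for reals a,b,c,d with ad - bc = 1. Then X ≥ 1/√2, and consequently log((√((b-c)²+(a+d)²) + √((b+c)²+(a-d)²))²/4) ≤ 2 log X + 3 log 2. -/
set_option maxHeartbeats 1000000


/-- For reals a,b,c,d with ad - bc = 1 and X = max(|a|,|b|,|c|,|d|), one has X ≥ 1/√2 and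
log((√((b-c)²+(a+d)²) + √((b+c)²+(a-d)²))²/4) ≤ 2 log X + 3 log 2. -/
theorem norm_lower_bound_and_log_estimate (a b c d : ℝ) (h : a * d - b * c = 1) :
    1 / Real.sqrt 2 ≤ max (max |a| |b|) (max |c| |d|) ∧
      Real.log ((Real.sqrt ((b - c) ^ 2 + (a + d) ^ 2) +
            Real.sqrt ((b + c) ^ 2 + (a - d) ^ 2)) ^ 2 / 4) ≤
        2 * Real.log (max (max |a| |b|) (max |c| |d|)) + 3 * Real.log 2 := by
  set X := max (max |a| |b|) (max |c| |d|) with hXdef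
  have ha : |a| ≤ X := le_trans (le_max_left _ _) (le_max_left _ _)
  have hb : |b| ≤ X := le_trans (le_max_right _ _) (le_max_left _ _)
  have hc : |c| ≤ X := le_trans (le_max_left _ _) (le_max_right _ _)
  have hd : |d| ≤ X := le_trans (le_max_right _ _) (le_max_right _ _)
  have hX0 : 0 ≤ X := le_trans (abs_nonneg a) ha
  have had : a * d ≤ |a| * |d| := by
    calc a * d ≤ |a * d| := le_abs_self _
    _ = |a| * |d| := abs_mul a d
  have hbc : -(b * c) ≤ |b| * |c| := by
    calc -(b * c) ≤ |b * c| := neg_le_abs _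
    _ = |b| * |c| := abs_mul b c
  have hX2 : 1 / 2 ≤ X ^ 2 := by
    nlinarith [mul_le_mul ha hd (abs_nonneg d) hX0, mul_le_mul hb hc (abs_nonneg c) hX0]
  have hfirst : 1 / Real.sqrt 2 ≤ X := by
    have h1 : Real.sqrt (1 / 2) ≤ X := by
      calc Real.sqrt (1 / 2) ≤ Real.sqrt (X ^ 2) := Real.sqrt_le_sqrt hX2
      _ = X := Real.sqrt_sq hX0
    calc 1 / Real.sqrt 2 = Real.sqrt (1 / 2) := by
          rw [one_div, ← Real.sqrt_inv]; norm_num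
    _ ≤ X := h1
  refine ⟨hfirst, ?_⟩
  have hXpos : 0 < X := lt_of_lt_of_le (by positivity) hfirst
  set r := Real.sqrt (8 * X ^ 2) with hr
  have hr2 : r ^ 2 = 8 * X ^ 2 := Real.sq_sqrt (by positivity)
  have ha2 : a ^ 2 ≤ X ^ 2 := by rw [← sq_abs]; exact pow_le_pow_left₀ (abs_nonneg a) ha 2
  have hb2 : b ^ 2 ≤ X ^ 2 := by rw [← sq_abs]; exact pow_le_pow_left₀ (abs_nonneg b) hb 2
  have hc2 : c ^ 2 ≤ X ^ 2 := by rw [← sq_abs]; exact pow_le_pow_left₀ (abs_nonneg c) hc 2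
  have hd2 : d ^ 2 ≤ X ^ 2 := by rw [← sq_abs]; exact pow_le_pow_left₀ (abs_nonneg d) hd 2
  have hbcX : |b| * |c| ≤ X ^ 2 := by
    have := mul_le_mul hb hc (abs_nonneg c) hX0; nlinarith
  have hadX : |a| * |d| ≤ X ^ 2 := by
    have := mul_le_mul ha hd (abs_nonneg d) hX0; nlinarith
  have hbc1 : -(b * c) ≤ X ^ 2 := hbc.trans hbcX
  have hbc2 : b * c ≤ X ^ 2 := (le_abs_self _).trans ((abs_mul b c).le.trans hbcX)
  have had1 : a * d ≤ X ^ 2 := had.trans hadX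
  have had2 : -(a * d) ≤ X ^ 2 := (neg_le_abs _).trans ((abs_mul a d).le.trans hadX)
  have hs1 : Real.sqrt ((b - c) ^ 2 + (a + d) ^ 2) ≤ r := by
    apply Real.sqrt_le_sqrt
    nlinarith [ha2, hb2, hc2, hd2, hbc1, had1]
  have hs2 : Real.sqrt ((b + c) ^ 2 + (a - d) ^ 2) ≤ r := by
    apply Real.sqrt_le_sqrt
    nlinarith [ha2, hb2, hc2, hd2, hbc2, had2]
  have hs1n : 0 ≤ Real.sqrt ((b - c) ^ 2 + (a + d) ^ 2) := Real.sqrt_nonneg _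
  have hs2n : 0 ≤ Real.sqrt ((b + c) ^ 2 + (a - d) ^ 2) := Real.sqrt_nonneg _
  have harg_le : (Real.sqrt ((b - c) ^ 2 + (a + d) ^ 2) +
      Real.sqrt ((b + c) ^ 2 + (a - d) ^ 2)) ^ 2 / 4 ≤ 8 * X ^ 2 := by
    have hsum : Real.sqrt ((b - c) ^ 2 + (a + d) ^ 2) +
        Real.sqrt ((b + c) ^ 2 + (a - d) ^ 2) ≤ 2 * r := by linarith
    have hsq : (Real.sqrt ((b - c) ^ 2 + (a + d) ^ 2) +
        Real.sqrt ((b + c) ^ 2 + (a - d) ^ 2)) ^ 2 ≤ (2 * r) ^ 2 :=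
      pow_le_pow_left₀ (by positivity) hsum 2
    have h4 : (2 * r) ^ 2 = 4 * (8 * X ^ 2) := by rw [mul_pow]; rw [hr2]; ring
    linarith
  have harg_nonneg : 0 ≤ (Real.sqrt ((b - c) ^ 2 + (a + d) ^ 2) +
      Real.sqrt ((b + c) ^ 2 + (a - d) ^ 2)) ^ 2 / 4 := by positivity
  have key : Real.log ((Real.sqrt ((b - c) ^ 2 + (a + d) ^ 2) +
      Real.sqrt ((b + c) ^ 2 + (a - d) ^ 2)) ^ 2 / 4) ≤ Real.log (8 * X ^ 2) := by
    rcases eq_or_lt_of_le harg_nonneg with h0 | h0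
    · rw [← h0, Real.log_zero]
      apply Real.log_nonneg
      nlinarith
    · exact Real.log_le_log h0 harg_le
  have hlog : Real.log (8 * X ^ 2) = 2 * Real.log X + 3 * Real.log 2 := by
    rw [Real.log_mul (by norm_num) (by positivity), Real.log_pow,
      show (8 : ℝ) = 2 ^ 3 by norm_num, Real.log_pow]
    push_cast
    ring
  linarith [key, hlog.le, hlog.ge]
end

section
/- Let Γ act by isometries on a geodesic metric space X, let B be a closed ball of radius R around z₀ with X = ∪_{γ∈Γ} γB, let S = {s ∈ Γ : sB ∩ B ≠ ∅}, and suppose S is finite and r = inf{d(B, γB) : γ ∈ Γ∖S} > 0. Then for every γ ∈ Γ, the word length satisfies ℓ_S(γ) ≤ (1/r) d(z₀, γ z₀) + 1. -/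
open Pointwise

/-- Word length of γ with respect to a generating set S. -/
noncomputable def wordLength {G : Type*} [Group G] (S : Set G) (γ : G) : ℕ :=
  sInf {n | ∃ L : List G, (∀ s ∈ L, s ∈ S) ∧ L.prod = γ ∧ L.length = n}

/-!
Cut a geodesic from `z₀` to `γ z₀` into `n ≤ d(z₀, γ z₀)/r + 1` pieces of length `< r` and
pick translates `γᵢ B` covering the subdivision points, with `γ₀ = 1` and `γₙ = γ`.
Consecutive translates contain points at distance `< r`, so `γᵢ⁻¹ γᵢ₊₁ ∈ S`, and the product of these
`n` letters telescopes to `γ`.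
-/

section WordLength

variable {G : Type*} [Group G] {S : Set G}

theorem wordLength_le_length {γ : G} {L : List G} (hL : ∀ s ∈ L, s ∈ S) (hprod : L.prod = γ) :
    wordLength S γ ≤ L.length :=
  Nat.sInf_le ⟨L, hL, hprod, rfl⟩

theorem wordLength_inv_mul_le {f : ℕ → G} {n : ℕ} (hf : ∀ i < n, (f i)⁻¹ * f (i + 1) ∈ S) :
    wordLength S ((f 0)⁻¹ * f n) ≤ n := by
  have hprod : ((List.range n).map fun i ↦ (f i)⁻¹ * f (i + 1)).prod = (f 0)⁻¹ * f n := by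
    simpa only [div_inv_eq_mul] using List.prod_range_div' n fun i ↦ (f i)⁻¹
  simpa using wordLength_le_length (by simpa using hf) hprod

end WordLength

theorem exists_chain_dist_lt_of_path {X : Type*} [PseudoMetricSpace X] {g : ℝ → X} {d r : ℝ}
    (hd : 0 ≤ d) (hg : ∀ s t, 0 ≤ s → s ≤ d → 0 ≤ t → t ≤ d → dist (g s) (g t) ≤ |s - t|)
    (hr : 0 < r) :
    ∃ n : ℕ, n ≠ 0 ∧ (n : ℝ) ≤ d / r + 1 ∧
      ∃ p : ℕ → X, p 0 = g 0 ∧ p n = g d ∧ ∀ i < n, dist (p i) (p (i + 1)) < r := by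
  set n : ℕ := ⌊d / r⌋₊ + 1 with hn_def
  have hn : (0 : ℝ) < n := by positivity
  have hdn : d / n < r := by
    rw [div_lt_iff₀ hn, ← div_lt_iff₀' hr, hn_def, Nat.cast_succ]
    exact Nat.lt_floor_add_one _
  have ht : ∀ i ≤ n, 0 ≤ i * d / n ∧ i * d / n ≤ d := fun i hi ↦
    ⟨by positivity, div_le_of_le_mul₀ hn.le hd
      (by rw [mul_comm d]; exact mul_le_mul_of_nonneg_right (by exact_mod_cast hi) hd)⟩
  refine ⟨n, Nat.cast_ne_zero.mp hn.ne', ?_, fun i ↦ g (i * d / n), by simp,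
    by simp [hn.ne'], fun i hi ↦ ?_⟩
  · rw [hn_def, Nat.cast_succ]
    exact add_le_add_left (Nat.floor_le (div_nonneg hd hr.le)) 1
  · obtain ⟨hi₀, hid⟩ := ht i hi.le
    obtain ⟨hi₀', hid'⟩ := ht (i + 1) hi
    have hstep : ((i + 1 : ℕ) : ℝ) * d / n - i * d / n = d / n := by push_cast; ring
    refine (hg _ _ hi₀ hid hi₀' hid').trans_lt ?_
    rwa [abs_sub_comm, hstep, abs_of_nonneg (by positivity)]

section Action

variable {Γ X : Type*} [Group Γ] [MulAction Γ X]

theorem exists_translates_along_chain {B : Set X} (hcover : ∀ x : X, ∃ γ : Γ, x ∈ γ • B)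
    {p : ℕ → X} {n : ℕ} (hn0 : n ≠ 0) {γ : Γ} (h0 : p 0 ∈ B) (hn : p n ∈ γ • B) :
    ∃ f : ℕ → Γ, f 0 = 1 ∧ f n = γ ∧ ∀ i, p i ∈ f i • B := by
  classical
  choose δ hδ using fun i ↦ hcover (p i)
  refine ⟨fun i ↦ if i = 0 then 1 else if i = n then γ else δ i, by simp, by simp [hn0],
    fun i ↦ ?_⟩
  dsimp only
  split_ifs with hi0 hin
  · simpa [hi0] using h0
  · simpa [hin] using hn
  · exact hδ i

theorem inv_mul_mem_of_dist_lt [PseudoMetricSpace X]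
    (hiso : ∀ (γ : Γ) (x y : X), dist (γ • x) (γ • y) = dist x y) {B : Set X} {S : Set Γ} {r : ℝ}
    (hfar : ∀ γ : Γ, γ ∉ S → ∀ x ∈ B, ∀ y ∈ γ • B, r ≤ dist x y)
    {a b : Γ} {x y : X} (hx : x ∈ a • B) (hy : y ∈ b • B) (hxy : dist x y < r) :
    a⁻¹ * b ∈ S := by
  by_contra hab
  have hx' : a⁻¹ • x ∈ B := Set.mem_smul_set_iff_inv_smul_mem.mp hx
  have hy' : a⁻¹ • y ∈ (a⁻¹ * b) • B := by
    rw [mul_smul]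
    exact Set.smul_mem_smul_set hy
  have := hfar _ hab _ hx' _ hy'
  rw [hiso] at this
  exact this.not_gt hxy

end Action

theorem svarc_milnor_wordLength_general {Γ X : Type*} [Group Γ] [MetricSpace X] [MulAction Γ X]
    (hiso : ∀ (γ : Γ) (x y : X), dist (γ • x) (γ • y) = dist x y)
    (hgeo : ∀ x y : X, ∃ g : ℝ → X, g 0 = x ∧ g (dist x y) = y ∧
      ∀ s t : ℝ, 0 ≤ s → s ≤ dist x y → 0 ≤ t → t ≤ dist x y → dist (g s) (g t) = |s - t|)
    (z₀ : X) (R : ℝ) (hR : 0 < R)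
    (hcover : ∀ x : X, ∃ γ : Γ, x ∈ γ • Metric.closedBall z₀ R)
    (S : Set Γ) (r : ℝ) (hr : 0 < r)
    (hrinf : ∀ γ : Γ, γ ∉ S → ∀ x ∈ Metric.closedBall z₀ R, ∀ y ∈ γ • Metric.closedBall z₀ R,
      r ≤ dist x y) :
    ∀ γ : Γ, (wordLength S γ : ℝ) ≤ (1 / r) * dist z₀ (γ • z₀) + 1 := by
  intro γ
  obtain ⟨g, hg0, hgd, hg⟩ := hgeo z₀ (γ • z₀)
  obtain ⟨n, hn0, hn, p, hp0, hpn, hp⟩ :=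
    exists_chain_dist_lt_of_path dist_nonneg (fun s t hs hs' ht ht' ↦ (hg s t hs hs' ht ht').le) hr
  have hz₀ : z₀ ∈ Metric.closedBall z₀ R := Metric.mem_closedBall_self hR.le
  obtain ⟨f, hf0, hfn, hf⟩ := exists_translates_along_chain (p := p) hcover hn0
    (by rwa [hp0, hg0]) (by rw [hpn, hgd]; exact Set.smul_mem_smul_set hz₀)
  have hword : wordLength S ((f 0)⁻¹ * f n) ≤ n :=
    wordLength_inv_mul_le fun i hi ↦ inv_mul_mem_of_dist_lt hiso hrinf (hf i) (hf (i + 1)) (hp i hi)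
  rw [hf0, hfn, inv_one, one_mul] at hword
  calc (wordLength S γ : ℝ) ≤ n := by exact_mod_cast hword
    _ ≤ dist z₀ (γ • z₀) / r + 1 := hn
    _ = (1 / r) * dist z₀ (γ • z₀) + 1 := by ring

/-- Švarc–Milnor type estimate: if Γ acts by isometries on a geodesic metric space X,
B is the closed ball of radius R around z₀ with X = ∪ γB, S = {s : sB ∩ B ≠ ∅} is finite
and r = inf{d(B,γB) : γ ∉ S} > 0, then ℓ_S(γ) ≤ (1/r) d(z₀, γz₀) + 1. -/
theorem svarc_milnor_wordLength {Γ X : Type*} [Group Γ] [MetricSpace X] [MulAction Γ X]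
    (hiso : ∀ (γ : Γ) (x y : X), dist (γ • x) (γ • y) = dist x y)
    (hgeo : ∀ x y : X, ∃ g : ℝ → X, g 0 = x ∧ g (dist x y) = y ∧
      ∀ s t : ℝ, 0 ≤ s → s ≤ dist x y → 0 ≤ t → t ≤ dist x y → dist (g s) (g t) = |s - t|)
    (z₀ : X) (R : ℝ) (hR : 0 < R)
    (hcover : ∀ x : X, ∃ γ : Γ, x ∈ γ • Metric.closedBall z₀ R)
    (S : Set Γ) (hS : S = {s : Γ | (s • Metric.closedBall z₀ R ∩ Metric.closedBall z₀ R).Nonempty})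
    (hSfin : S.Finite) (r : ℝ) (hr : 0 < r)
    (hrinf : ∀ γ : Γ, γ ∉ S → ∀ x ∈ Metric.closedBall z₀ R, ∀ y ∈ γ • Metric.closedBall z₀ R,
      r ≤ dist x y) :
    ∀ γ : Γ, (wordLength S γ : ℝ) ≤ (1 / r) * dist z₀ (γ • z₀) + 1 :=
  svarc_milnor_wordLength_general hiso hgeo z₀ R hR hcover S r hr hrinf
end
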